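/- For every x in X and every natural number n, the number of points of Z_2 in the triangle Δ_n(x) is at most 5n + 1. -/
import Mathlib


open MeasureTheory Filter

/-- Configurations: `ℤ²`-indexed families of elements of `ℤ/2ℤ`. -/
abbrev Config := ℤ → ℤ → ZMod 2

/-- The three-dot relation. -/
def threeDot (x : Config) : Prop :=
  ∀ k l : ℤ, x k l + x (k + 1) l + x k (l + 1) = 0

/-- The three-dot system `X`. -/
def Xset : Set Config := {x | threeDot x}

/-- The `ℤ²`-shift action: `shift k l x = T^k S^l x`. -/
def shift (k l : ℤ) (x : Config) : Config := fun a b => x (a + k) (b + l)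

/-- The shift `T`. -/
def Tm : Config → Config := shift 1 0

/-- The shift `S`. -/
def Sm : Config → Config := shift 0 1

/-- `Y` : points of `X` with coordinate `1` at the origin. -/
def Yset : Set Config := {x | threeDot x ∧ x 0 0 = 1}

/-- The map `σ : Y → Y`, extended to all configurations:
it equals `Tx` if `Tx` has a `1` at the origin, and `Sx` otherwise. -/
def sig (x : Config) : Config := if x 1 0 = 1 then Tm x else Sm x

/-- `Z` : points of `Y` with σ-antecedents of every depth (equivalently,
infinitely many σ-antecedents). -/
def Zset : Set Config := {x | x ∈ Yset ∧ ∀ n : ℕ, ∃ y ∈ Yset, sig^[n] y = x}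

/-- `Z₂` : points of `Z` having two distinct σ-preimages in `Z`. -/
def Z2set : Set Config :=
  {x | x ∈ Zset ∧ ∃ y z, y ≠ z ∧ y ∈ Zset ∧ z ∈ Zset ∧ sig y = x ∧ sig z = x}

/-- The σ-component of a point `x` of `Y`: points of the `ℤ²`-orbit of `x`
lying in `Y` whose forward σ-trajectory meets that of `x`. -/
def sigComp (x : Config) : Set Config :=
  {y | (∃ k l : ℤ, y = shift k l x) ∧ y ∈ Yset ∧ ∃ p q : ℕ, sig^[p] x = sig^[q] y}

/-- Aperiodicity of a configuration for the `ℤ²`-action. -/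
def Aperiodic (x : Config) : Prop := ∀ k l : ℤ, shift k l x = x → k = 0 ∧ l = 0

lemma shift_shift (x : Config) (a b c d : ℤ) :
    shift a b (shift c d x) = shift (a+c) (b+d) x := by
  funext k l
  show x (k + a + c) (l + b + d) = x (k + (a+c)) (l + (b+d))
  congr 1 <;> ring

lemma shift_zero (x : Config) : shift 0 0 x = x := by
  funext k l; show x (k+0) (l+0) = x k l; simp

lemma threeDot_shift {x : Config} (hx : threeDot x) (a b : ℤ) : threeDot (shift a b x) := by
  intro k l
  show x (k+a) (l+b) + x (k+1+a) (l+b) + x (k+a) (l+1+b) = 0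
  have := hx (k+a) (l+b)
  convert this using 3 <;> ring

lemma sig_mem_Yset {y : Config} (hy : y ∈ Yset) : sig y ∈ Yset := by
  obtain ⟨h3, h0⟩ := hy
  by_cases h : y 1 0 = 1
  · rw [sig, if_pos h]
    exact ⟨threeDot_shift h3 1 0, by show y (0+1) (0+0) = 1; simpa using h⟩
  · rw [sig, if_neg h]
    refine ⟨threeDot_shift h3 0 1, ?_⟩
    show y (0+0) (0+1) = 1
    have h2 := h3 0 0
    have hy10 : y 1 0 = 0 := by
      rcases (by decide : ∀ a : ZMod 2, a = 0 ∨ a = 1) (y 1 0) with h' | h'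
      · exact h'
      · exact absurd h' h
    simp only [zero_add, add_zero]
    simp only [zero_add, add_zero] at h2
    rw [h0, hy10] at h2
    revert h2
    generalize y 0 1 = a
    revert a
    decide

lemma sig_eq_or (y : Config) : sig y = shift 1 0 y ∨ sig y = shift 0 1 y := by
  by_cases h : y 1 0 = 1
  · left; rw [sig, if_pos h]; rfl
  · right; rw [sig, if_neg h]; rfl

lemma preimage_char {y w : Config} (h : sig y = w) :
    y = shift (-1) 0 w ∨ y = shift 0 (-1) w := by
  rcases sig_eq_or y with h' | h'
  · left; rw [← h, h', shift_shift]; norm_num; rw [shift_zero]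
  · right; rw [← h, h', shift_shift]; norm_num; rw [shift_zero]

lemma iter_mem_Yset {y : Config} (hy : y ∈ Yset) (n : ℕ) : sig^[n] y ∈ Yset := by
  induction n with
  | zero => simpa using hy
  | succ m ih => rw [Function.iterate_succ_apply']; exact sig_mem_Yset ih

lemma sig_mem_Zset {z : Config} (hz : z ∈ Zset) : sig z ∈ Zset := by
  obtain ⟨hzY, hdep⟩ := hz
  refine ⟨sig_mem_Yset hzY, fun n => ?_⟩
  cases n with
  | zero => exact ⟨sig z, sig_mem_Yset hzY, rfl⟩
  | succ m =>
    obtain ⟨y, hyY, hy⟩ := hdep m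
    exact ⟨y, hyY, by rw [Function.iterate_succ_apply', hy]⟩

lemma mem_Zset_of_unbounded {c : Config} (hc : c ∈ Yset)
    (h : ∀ N : ℕ, ∃ m ≥ N, ∃ z ∈ Yset, sig^[m] z = c) : c ∈ Zset := by
  refine ⟨hc, fun m => ?_⟩
  obtain ⟨k, hk, z, hzY, hz⟩ := h m
  refine ⟨sig^[k - m] z, iter_mem_Yset hzY _, ?_⟩
  rw [← Function.iterate_add_apply]
  have : m + (k - m) = k := by omega
  rw [this, hz]

lemma exists_Z_preimage {c : Config} (hc : c ∈ Zset) : ∃ y ∈ Zset, sig y = c := by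
  classical
  obtain ⟨hcY, hdep⟩ := hc
  have key : ∀ m : ℕ,
      (shift (-1) 0 c ∈ Yset ∧ sig (shift (-1) 0 c) = c ∧
        ∃ z ∈ Yset, sig^[m] z = shift (-1) 0 c) ∨
      (shift 0 (-1) c ∈ Yset ∧ sig (shift 0 (-1) c) = c ∧
        ∃ z ∈ Yset, sig^[m] z = shift 0 (-1) c) := by
    intro m
    obtain ⟨z, hzY, hz⟩ := hdep (m + 1)
    have hsig : sig (sig^[m] z) = c := by
      rw [← hz]; exact (Function.iterate_succ_apply' sig m z).symm
    have hYm : sig^[m] z ∈ Yset := iter_mem_Yset hzY m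
    rcases preimage_char hsig with h' | h'
    · exact Or.inl ⟨h' ▸ hYm, h' ▸ hsig, z, hzY, h'⟩
    · exact Or.inr ⟨h' ▸ hYm, h' ▸ hsig, z, hzY, h'⟩
  by_cases hAinf : ∀ N : ℕ, ∃ m ≥ N, shift (-1) 0 c ∈ Yset ∧ sig (shift (-1) 0 c) = c ∧
      ∃ z ∈ Yset, sig^[m] z = shift (-1) 0 c
  · obtain ⟨m0, _, hAY, hAs, _⟩ := hAinf 0
    refine ⟨shift (-1) 0 c, mem_Zset_of_unbounded hAY ?_, hAs⟩
    intro N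
    obtain ⟨m, hm, _, _, hex⟩ := hAinf N
    exact ⟨m, hm, hex⟩
  · rw [not_forall] at hAinf
    obtain ⟨N, hN⟩ := hAinf
    have hB' : ∀ m, N ≤ m → (shift 0 (-1) c ∈ Yset ∧ sig (shift 0 (-1) c) = c ∧
        ∃ z ∈ Yset, sig^[m] z = shift 0 (-1) c) := by
      intro m hm
      rcases key m with ⟨h1, h2, h3⟩ | hb
      · exact (hN ⟨m, hm, h1, h2, h3⟩).elim
      · exact hb
    obtain ⟨hBY, hBs, _⟩ := hB' N le_rfl
    refine ⟨shift 0 (-1) c, mem_Zset_of_unbounded hBY ?_, hBs⟩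
    intro M
    exact ⟨max M N, le_max_left _ _, (hB' (max M N) (le_max_right _ _)).2.2⟩

lemma shift_eq_shift (x : Config) {a b c d : ℤ} (h1 : a = c) (h2 : b = d) :
    shift a b x = shift c d x := by rw [h1, h2]

lemma shift_inj {x : Config} (hap : Aperiodic x) {a b c d : ℤ}
    (h : shift a b x = shift c d x) : a = c ∧ b = d := by
  have h2 : shift (-c + a) (-d + b) x = x := by
    have h3 := congrArg (shift (-c) (-d)) h
    rw [shift_shift, shift_shift] at h3
    rw [h3]
    have : (-c + c : ℤ) = 0 := by ring
    have h4 : (-d + d : ℤ) = 0 := by ring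
    rw [this, h4, shift_zero]
  obtain ⟨e1, e2⟩ := hap _ _ h2
  omega

lemma shift_nat_inj {x : Config} (hap : Aperiodic x) {p q : ℕ × ℕ}
    (h : shift (p.1 : ℤ) (p.2 : ℤ) x = shift (q.1 : ℤ) (q.2 : ℤ) x) : p = q := by
  obtain ⟨e1, e2⟩ := shift_inj hap h
  exact Prod.ext (by exact_mod_cast e1) (by exact_mod_cast e2)

open Classical in
noncomputable def gp (x : Config) (p : ℕ × ℕ) : ℕ × ℕ :=
  if sig (shift (p.1 : ℤ) (p.2 : ℤ) x) = shift ((p.1+1 : ℕ) : ℤ) (p.2 : ℤ) x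
  then (p.1+1, p.2) else (p.1, p.2+1)

lemma gp_spec (x : Config) (p : ℕ × ℕ) :
    shift (((gp x p).1 : ℕ) : ℤ) (((gp x p).2 : ℕ) : ℤ) x
      = sig (shift (p.1 : ℤ) (p.2 : ℤ) x) ∧
      (gp x p = (p.1+1, p.2) ∨ gp x p = (p.1, p.2+1)) := by
  rw [gp]; split_ifs with h
  · exact ⟨h.symm, Or.inl rfl⟩
  · refine ⟨?_, Or.inr rfl⟩
    rcases sig_eq_or (shift (p.1 : ℤ) (p.2 : ℤ) x) with h' | h'
    · exact absurd (h'.trans (by rw [shift_shift]; apply shift_eq_shift <;> push_cast <;> ring)) h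
    · rw [h', shift_shift]
      apply shift_eq_shift <;> push_cast <;> ring

lemma parent_mem {x : Config} {w : Config} {y : Config} (h : sig y = w) (a b : ℤ)
    (hw : w = shift a b x) :
    y = shift (a - 1) b x ∨ y = shift a (b - 1) x := by
  rcases preimage_char h with h' | h'
  · left; rw [h', hw, shift_shift]; apply shift_eq_shift <;> ring
  · right; rw [h', hw, shift_shift]; apply shift_eq_shift <;> ring

/-- At most `5n+1` points of `Z₂` in the triangle `Δ_n(x)`. -/
theorem stmt4 (x : Config) (hx : threeDot x) (hap : Aperiodic x) (n : ℕ) :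
    Set.ncard {p : ℕ × ℕ | p.1 + p.2 ≤ n ∧ shift (p.1 : ℤ) (p.2 : ℤ) x ∈ Z2set}
      ≤ 5 * n + 1 := by
  classical
  rcases Nat.eq_zero_or_pos n with hn | hn
  · subst hn
    have hsub : {p : ℕ × ℕ | p.1 + p.2 ≤ 0 ∧ shift (p.1 : ℤ) (p.2 : ℤ) x ∈ Z2set}
        ⊆ {((0:ℕ),(0:ℕ))} := by
      rintro ⟨a, b⟩ ⟨h1, _⟩
      have ha : a = 0 ∧ b = 0 := by omega
      simp [ha.1, ha.2]
    calc Set.ncard {p : ℕ × ℕ | p.1 + p.2 ≤ 0 ∧ shift (p.1 : ℤ) (p.2 : ℤ) x ∈ Z2set}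
        ≤ Set.ncard {((0:ℕ),(0:ℕ))} := Set.ncard_le_ncard hsub (Set.finite_singleton _)
      _ = 1 := Set.ncard_singleton _
      _ ≤ 5 * 0 + 1 := le_rfl
  set T : Finset (ℕ × ℕ) :=
    (Finset.range (n+1) ×ˢ Finset.range (n+1)).filter (fun p => p.1 + p.2 ≤ n) with hT
  have memT : ∀ p : ℕ × ℕ, p ∈ T ↔ p.1 + p.2 ≤ n := by
    intro p
    simp only [hT, Finset.mem_filter, Finset.mem_product, Finset.mem_range]
    omega
  set V : Finset (ℕ × ℕ) := T.filter (fun p => shift (p.1 : ℤ) (p.2 : ℤ) x ∈ Zset) with hV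
  set B2 : Finset (ℕ × ℕ) := T.filter (fun p => shift (p.1 : ℤ) (p.2 : ℤ) x ∈ Z2set) with hB2
  set E : Finset (ℕ × ℕ) := V.filter (fun p => p.1 + p.2 < n) with hE
  set Vint : Finset (ℕ × ℕ) := V.filter (fun p => 1 ≤ p.1 ∧ 1 ≤ p.2) with hVint
  have hset : {p : ℕ × ℕ | p.1 + p.2 ≤ n ∧ shift (p.1 : ℤ) (p.2 : ℤ) x ∈ Z2set} = ↑B2 := by
    ext p
    simp only [Set.mem_setOf_eq, Finset.mem_coe, hB2, Finset.mem_filter, memT]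
  rw [hset, Set.ncard_coe_finset]
  -- gp maps E into V
  have gE : ∀ v ∈ E, gp x v ∈ V := by
    intro v hv
    rw [hE, Finset.mem_filter] at hv
    obtain ⟨hvV, hvsum⟩ := hv
    rw [hV, Finset.mem_filter] at hvV
    obtain ⟨hvT, hvZ⟩ := hvV
    obtain ⟨hspec, hor⟩ := gp_spec x v
    rw [hV, Finset.mem_filter]
    constructor
    · rw [memT]
      rcases hor with h | h <;> rw [h] <;> simp <;> omega
    · rw [hspec]
      exact sig_mem_Zset hvZ
  -- parents land in fibers
  have key : ∀ w ∈ Vint, ∀ y, y ∈ Zset → sig y = shift (w.1 : ℤ) (w.2 : ℤ) x →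
      ∃ v ∈ E.filter (fun v => gp x v = w),
        shift (v.1 : ℤ) (v.2 : ℤ) x = y ∧ (v = (w.1 - 1, w.2) ∨ v = (w.1, w.2 - 1)) := by
    intro w hw y hyZ hy
    rw [hVint, Finset.mem_filter] at hw
    obtain ⟨hwV, hw1, hw2⟩ := hw
    rw [hV, Finset.mem_filter, memT] at hwV
    obtain ⟨hwT, hwZ⟩ := hwV
    have hpar := parent_mem hy (w.1 : ℤ) (w.2 : ℤ) rfl
    have main : ∀ v : ℕ × ℕ, shift (v.1 : ℤ) (v.2 : ℤ) x = y → v.1 + v.2 + 1 = w.1 + w.2 →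
        v ∈ E.filter (fun v => gp x v = w) := by
      intro v hvy hvsum
      have hvZ : shift (v.1 : ℤ) (v.2 : ℤ) x ∈ Zset := by rw [hvy]; exact hyZ
      have hvE : v ∈ E := by
        rw [hE, Finset.mem_filter, hV, Finset.mem_filter, memT]
        exact ⟨⟨by omega, hvZ⟩, by omega⟩
      obtain ⟨hspec, _⟩ := gp_spec x v
      have : shift ((gp x v).1 : ℤ) ((gp x v).2 : ℤ) x = shift (w.1 : ℤ) (w.2 : ℤ) x := by
        rw [hspec, hvy, hy]
      exact Finset.mem_filter.mpr ⟨hvE, shift_nat_inj hap this⟩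
    rcases hpar with h | h
    · refine ⟨(w.1 - 1, w.2), main _ ?_ (by omega), ?_, Or.inl rfl⟩
      · rw [h]; exact shift_eq_shift x (by omega) rfl
      · rw [h]; exact shift_eq_shift x (by omega) rfl
    · refine ⟨(w.1, w.2 - 1), main _ ?_ (by omega), ?_, Or.inr rfl⟩
      · rw [h]; exact shift_eq_shift x rfl (by omega)
      · rw [h]; exact shift_eq_shift x rfl (by omega)
  -- fiber bounds
  have fiber_ge : ∀ w ∈ Vint,
      1 + (if shift (w.1 : ℤ) (w.2 : ℤ) x ∈ Z2set then 1 else 0)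
        ≤ (E.filter (fun v => gp x v = w)).card := by
    intro w hw
    have hwZ : shift (w.1 : ℤ) (w.2 : ℤ) x ∈ Zset := by
      have := hw
      rw [hVint, Finset.mem_filter, hV, Finset.mem_filter] at this
      exact this.1.2
    by_cases hZ2 : shift (w.1 : ℤ) (w.2 : ℤ) x ∈ Z2set
    · rw [if_pos hZ2]
      obtain ⟨_, y, z, hyz, hyZ, hzZ, hy, hz⟩ := hZ2
      obtain ⟨vy, hvy, hvyx, hvyor⟩ := key w hw y hyZ hy
      obtain ⟨vz, hvz, hvzx, hvzor⟩ := key w hw z hzZ hz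
      have hne : vy ≠ vz := by
        intro hEq
        apply hyz
        rw [← hvyx, ← hvzx, hEq]
      have : 1 < (E.filter (fun v => gp x v = w)).card :=
        Finset.one_lt_card.mpr ⟨vy, hvy, vz, hvz, hne⟩
      omega
    · rw [if_neg hZ2]
      obtain ⟨y, hyZ, hy⟩ := exists_Z_preimage hwZ
      obtain ⟨vy, hvy, _, _⟩ := key w hw y hyZ hy
      have : 0 < (E.filter (fun v => gp x v = w)).card := Finset.card_pos.mpr ⟨vy, hvy⟩
      omega
  have hEcard : E.card = ∑ w ∈ V, (E.filter (fun v => gp x v = w)).card :=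
    Finset.card_eq_sum_card_fiberwise gE
  have hsum1 : Vint.card + (Vint.filter (fun p => shift (p.1 : ℤ) (p.2 : ℤ) x ∈ Z2set)).card
      ≤ E.card := by
    rw [hEcard]
    calc Vint.card + (Vint.filter (fun p => shift (p.1 : ℤ) (p.2 : ℤ) x ∈ Z2set)).card
        = ∑ w ∈ Vint, (1 + if shift (w.1 : ℤ) (w.2 : ℤ) x ∈ Z2set then 1 else 0) := by
          rw [Finset.sum_add_distrib, Finset.sum_const, smul_eq_mul, mul_one, Finset.sum_boole]
          simp
      _ ≤ ∑ w ∈ Vint, (E.filter (fun v => gp x v = w)).card := Finset.sum_le_sum fiber_ge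
      _ ≤ ∑ w ∈ V, (E.filter (fun v => gp x v = w)).card :=
          Finset.sum_le_sum_of_subset (Finset.filter_subset _ _)
  -- boundary
  set Bd : Finset (ℕ × ℕ) := T.filter (fun p => p.1 = 0 ∨ p.2 = 0) with hBd
  have hBdcard : Bd.card ≤ 2 * n + 1 := by
    set A : Finset (ℕ × ℕ) := (Finset.range (n+1)).image (fun l => ((0:ℕ), l)) with hA
    set B : Finset (ℕ × ℕ) := (Finset.range (n+1)).image (fun k => (k, (0:ℕ))) with hB
    have hAcard : A.card = n + 1 := by
      rw [hA, Finset.card_image_of_injective _ (fun a b h => (Prod.ext_iff.mp h).2),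
        Finset.card_range]
    have hBcard : B.card = n + 1 := by
      rw [hB, Finset.card_image_of_injective _ (fun a b h => (Prod.ext_iff.mp h).1),
        Finset.card_range]
    have hsubU : Bd ⊆ A ∪ B := by
      intro p hp
      rw [hBd, Finset.mem_filter, memT] at hp
      rw [Finset.mem_union, hA, hB]
      rcases hp.2 with h | h
      · left
        simp only [Finset.mem_image, Finset.mem_range]
        exact ⟨p.2, by omega, by rw [← h]⟩
      · right
        simp only [Finset.mem_image, Finset.mem_range]
        exact ⟨p.1, by omega, by rw [← h]⟩
    have hinter : 1 ≤ (A ∩ B).card := by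
      refine Finset.card_pos.mpr ⟨((0:ℕ),(0:ℕ)), ?_⟩
      rw [Finset.mem_inter, hA, hB]
      constructor <;> · simp only [Finset.mem_image, Finset.mem_range]; exact ⟨0, by omega, rfl⟩
    have hU := Finset.card_union_add_card_inter A B
    have := Finset.card_le_card hsubU
    omega
  -- assemble
  have hsplit : (B2.filter (fun p => 1 ≤ p.1 ∧ 1 ≤ p.2)).card
      + (B2.filter (fun p => ¬(1 ≤ p.1 ∧ 1 ≤ p.2))).card = B2.card :=
    Finset.card_filter_add_card_filter_not _
  have hVsplit : Vint.card + (V.filter (fun p => ¬(1 ≤ p.1 ∧ 1 ≤ p.2))).card = V.card := by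
    rw [hVint]
    exact Finset.card_filter_add_card_filter_not _
  have hB2int : (B2.filter (fun p => 1 ≤ p.1 ∧ 1 ≤ p.2)).card
      ≤ (Vint.filter (fun p => shift (p.1 : ℤ) (p.2 : ℤ) x ∈ Z2set)).card := by
    apply Finset.card_le_card
    intro p hp
    rw [Finset.mem_filter, hB2, Finset.mem_filter] at hp
    rw [Finset.mem_filter, hVint, Finset.mem_filter, hV, Finset.mem_filter]
    exact ⟨⟨⟨hp.1.1, hp.1.2.1⟩, hp.2⟩, hp.1.2⟩
  have hB2bd : (B2.filter (fun p => ¬(1 ≤ p.1 ∧ 1 ≤ p.2))).card ≤ Bd.card := by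
    apply Finset.card_le_card
    intro p hp
    rw [Finset.mem_filter, hB2, Finset.mem_filter] at hp
    rw [hBd, Finset.mem_filter]
    exact ⟨hp.1.1, by omega⟩
  have hVbd : (V.filter (fun p => ¬(1 ≤ p.1 ∧ 1 ≤ p.2))).card ≤ Bd.card := by
    apply Finset.card_le_card
    intro p hp
    rw [Finset.mem_filter, hV, Finset.mem_filter] at hp
    rw [hBd, Finset.mem_filter]
    exact ⟨hp.1.1, by omega⟩
  have hEV : E.card ≤ V.card := Finset.card_le_card (Finset.filter_subset _ _)
  omega
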